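/- The map Λ sending a triangulation A of a convex (n+2)-gon to the partition (λ_1(A), ..., λ_{n-1}(A)) of decreasingly-ordered tails of its diagonals is a bijection from the set of triangulations of the (n+2)-gon onto the set Y_n of partitions λ with λ_k ≤ n - k for all k. -/

import Mathlib

/-- `(a,b)` is a diagonal of the convex `n`-gon with vertices `0, …, n-1`. -/
def IsDiagonal (n a b : ℕ) : Prop :=
  a + 2 ≤ b ∧ b ≤ n - 1 ∧ ¬(a = 0 ∧ b = n - 1)

/-- Two diagonals (as ordered pairs, smaller endpoint first) cross each other. -/
def Crossing (p q : ℕ × ℕ) : Prop :=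
  (p.1 < q.1 ∧ q.1 < p.2 ∧ p.2 < q.2) ∨ (q.1 < p.1 ∧ p.1 < q.2 ∧ q.2 < p.2)

/-- A triangulation of the convex `n`-gon: a set of `n - 3` pairwise
non-crossing diagonals (equivalently, a maximal non-crossing set of diagonals). -/
def IsTriangulation (n : ℕ) (T : Finset (ℕ × ℕ)) : Prop :=
  (∀ p ∈ T, IsDiagonal n p.1 p.2) ∧
  (∀ p ∈ T, ∀ q ∈ T, ¬ Crossing p q) ∧
  T.card = n - 3
/-- The list of tails (smaller endpoints) of the diagonals of `T`,
sorted in decreasing order. -/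
def tails (T : Finset (ℕ × ℕ)) : List ℕ :=
  (T.val.map Prod.fst).sort (· ≥ ·)

/-- `lam T k` is the `k`-th largest tail `λ_k` of a diagonal of `T`
(`k ≥ 1`; it is `0` if `T` has fewer than `k` diagonals). -/
def lam (T : Finset (ℕ × ℕ)) : ℕ → ℕ :=
  fun k => if k = 0 then 0 else (tails T).getD (k - 1) 0

/-- The partition `f` (with `f k` the length of row `k`, `k ≥ 1`) lies in `Y_n`:
`f k ≤ n - k` for all `k ≥ 1`. -/
def InY (n : ℕ) (f : ℕ → ℕ) : Prop :=
  f 0 = 0 ∧ (∀ k, 1 ≤ k → f (k + 1) ≤ f k) ∧ (∀ k, 1 ≤ k → f k ≤ n - k)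

/-!
Let `a` be the largest tail of a triangulation `T` of the `(n+2)`-gon and `(a, b)` the shortest
diagonal of `T` at `a`. If `b > a + 2`, the diagonal `(a + 1, b)` would cross nothing in `T`,
contradicting maximality (a non-crossing set of diagonals of an `m`-gon has at most `m - 3`
elements, by splitting along the longest chord at the first vertex). So `(a, a + 2)` cuts off an
ear, and deleting its apex `a + 1` leaves a triangulation of the `(n+1)`-gon whose tails are the
other tails of `T`. Conversely an ear can be glued onto the side `(a, a + 1)` of any triangulation
of the `(n+1)`-gon whose tails are all `≤ a`. Hence `Λ` strips off the first row `λ₁ = a`, and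
induction on `n` gives the bijection.
-/

def NonCrossing (G : Finset (ℕ × ℕ)) : Prop :=
  ∀ p ∈ G, ∀ q ∈ G, ¬ Crossing p q

def IsChordIn (l r : ℕ) (p : ℕ × ℕ) : Prop :=
  l ≤ p.1 ∧ p.1 + 2 ≤ p.2 ∧ p.2 ≤ r

lemma Crossing.symm {p q : ℕ × ℕ} (h : Crossing p q) : Crossing q p := by
  unfold Crossing at *
  tauto

lemma not_crossing_self (p : ℕ × ℕ) : ¬ Crossing p p := by
  unfold Crossing
  omega

namespace NonCrossing

variable {G H : Finset (ℕ × ℕ)}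

lemma mono (hH : NonCrossing H) (hGH : G ⊆ H) : NonCrossing G :=
  fun p hp q hq => hH p (hGH hp) q (hGH hq)

lemma insert (hG : NonCrossing G) {d : ℕ × ℕ} (hd : ∀ p ∈ G, ¬ Crossing d p) :
    NonCrossing (insert d G) := by
  intro p hp q hq
  rcases Finset.mem_insert.mp hp with rfl | hpG <;> rcases Finset.mem_insert.mp hq with rfl | hqG
  · exact not_crossing_self _
  · exact hd q hqG
  · exact fun h => hd p hpG h.symm
  · exact hG p hpG q hqG

end NonCrossing

lemma card_le_sub_one_of_card_erase_le {l r : ℕ} {G : Finset (ℕ × ℕ)}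
    (hG : ∀ p ∈ G, IsChordIn l r p) (h : (G.erase (l, r)).card ≤ r - l - 2) :
    G.card ≤ r - l - 1 := by
  by_cases hlr : (l, r) ∈ G
  · have := Finset.card_erase_add_one hlr
    have := (hG _ hlr).2.1
    omega
  · rw [Finset.erase_eq_of_notMem hlr] at h
    omega

theorem card_le_of_nonCrossing_chords (l r : ℕ) (G : Finset (ℕ × ℕ))
    (hG : ∀ p ∈ G, IsChordIn l r p) (hnc : NonCrossing G) (hlr : (l, r) ∉ G) :
    G.card ≤ r - l - 2 := by
  classical
  induction hd : r - l using Nat.strong_induction_on generalizing l r G with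
  | _ d ih =>
  have card_le : ∀ l' r', r' - l' < d → ∀ G' : Finset (ℕ × ℕ), (∀ p ∈ G', IsChordIn l' r' p) →
      NonCrossing G' → G'.card ≤ r' - l' - 1 := fun l' r' hlt G' hG' hnc' =>
    card_le_sub_one_of_card_erase_le hG' <|
      ih _ hlt l' r' _ (fun p hp => hG' p (Finset.mem_of_mem_erase hp))
        (hnc'.mono (Finset.erase_subset _ _)) (Finset.notMem_erase _ _) rfl
  subst hd
  rcases G.eq_empty_or_nonempty with rfl | ⟨p₀, hp₀⟩
  · simp
  have hlr₀ : l < r := by obtain ⟨_, _, _⟩ := hG p₀ hp₀; omega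
  by_cases hl : ∃ b, (l, b) ∈ G
  swap
  · push Not at hl
    have hG' : ∀ p ∈ G, IsChordIn (l + 1) r p := by
      intro p hp
      obtain ⟨h₁, h₂, h₃⟩ := hG p hp
      have : p.1 ≠ l := fun h => hl p.2 (by rwa [← h])
      exact ⟨by omega, h₂, h₃⟩
    have := card_le (l + 1) r (by omega) G hG' hnc
    omega
  -- split along the longest chord `(l, c)` from `l`
  obtain ⟨b, hb⟩ := hl
  set c := Nat.findGreatest (fun b => (l, b) ∈ G) r
  have hc : (l, c) ∈ G := Nat.findGreatest_spec (P := fun b => (l, b) ∈ G) (hG _ hb).2.2 hb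
  have hcr : c < r := lt_of_le_of_ne (hG _ hc).2.2 fun h => hlr (h ▸ hc)
  have hlc : l + 2 ≤ c := (hG _ hc).2.1
  have hsplit : ∀ q ∈ G, q.2 ≤ c ∨ c ≤ q.1 := by
    intro q hq
    obtain ⟨h₁, h₂, h₃⟩ := hG q hq
    by_cases hql : q.1 = l
    · exact Or.inl (Nat.le_findGreatest h₃ (by rwa [← hql]))
    · have := hnc _ hc q hq
      unfold Crossing at this
      omega
  have hleft := card_le l c (by omega) (G.filter (·.2 ≤ c))
    (fun p hp => by
      obtain ⟨hp, hpc⟩ := Finset.mem_filter.mp hp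
      exact ⟨(hG p hp).1, (hG p hp).2.1, hpc⟩)
    (hnc.mono (Finset.filter_subset _ _))
  have hright := card_le c r (by omega) (G.filter fun p => ¬ p.2 ≤ c)
    (fun p hp => by
      obtain ⟨hp, hpc⟩ := Finset.mem_filter.mp hp
      exact ⟨(hsplit p hp).resolve_left hpc, (hG p hp).2.1, (hG p hp).2.2⟩)
    (hnc.mono (Finset.filter_subset _ _))
  have := Finset.card_filter_add_card_filter_not (s := G) (·.2 ≤ c)
  omega

theorem card_le_of_nonCrossing {m : ℕ} {S : Finset (ℕ × ℕ)}
    (hS : ∀ p ∈ S, IsDiagonal m p.1 p.2) (hnc : NonCrossing S) : S.card ≤ m - 3 := by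
  have := card_le_of_nonCrossing_chords 0 (m - 1) S
    (fun p hp => ⟨Nat.zero_le _, (hS p hp).1, (hS p hp).2.1⟩) hnc
    fun h => (hS _ h).2.2 ⟨rfl, rfl⟩
  omega

namespace IsTriangulation

variable {m : ℕ} {T : Finset (ℕ × ℕ)}

lemma nonCrossing (hT : IsTriangulation m T) : NonCrossing T := hT.2.1

theorem mem_of_forall_not_crossing (hT : IsTriangulation m T) {d : ℕ × ℕ}
    (hd : IsDiagonal m d.1 d.2) (hdT : ∀ p ∈ T, ¬ Crossing d p) : d ∈ T := by
  by_contra hdT'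
  have := card_le_of_nonCrossing (S := insert d T)
    (fun p hp => (Finset.mem_insert.mp hp).elim (· ▸ hd) (hT.1 p)) (hT.nonCrossing.insert hdT)
  rw [Finset.card_insert_of_notMem hdT', hT.2.2] at this
  omega

theorem ear_mem (hT : IsTriangulation m T) {a : ℕ} (htail : ∀ p ∈ T, p.1 ≤ a) {b : ℕ}
    (hab : (a, b) ∈ T) : (a, a + 2) ∈ T := by
  induction b using Nat.strong_induction_on with
  | _ b ih =>
  obtain ⟨hab₂, hbm, -⟩ := hT.1 _ hab
  obtain rfl | hb := (show b = a + 2 ∨ a + 3 ≤ b by omega)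
  · exact hab
  obtain ⟨p, hp, hcross⟩ : ∃ p ∈ T, Crossing (a + 1, b) p := by
    by_contra! h
    have := htail _ (hT.mem_of_forall_not_crossing (d := (a + 1, b)) ⟨by omega, hbm, by omega⟩ h)
    omega
  have hpa := htail p hp
  have hnc := hT.nonCrossing _ hab p hp
  unfold Crossing at hcross hnc
  have hpa' : p.1 = a := by omega
  exact ih p.2 (by omega) (by rwa [← hpa'])

end IsTriangulation

def succAbove (a v : ℕ) : ℕ := if v ≤ a then v else v + 1

def predAbove (a v : ℕ) : ℕ := if v ≤ a then v else v - 1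

lemma succAbove_injective (a : ℕ) : Function.Injective (succAbove a) := by
  intro v w h
  unfold succAbove at h
  split_ifs at h <;> omega

lemma succAbove_predAbove {a v : ℕ} (hv : v ≠ a + 1) : succAbove a (predAbove a v) = v := by
  unfold succAbove predAbove
  split_ifs <;> omega

lemma crossing_map_succAbove_iff (a : ℕ) (p q : ℕ × ℕ) :
    Crossing (Prod.map (succAbove a) (succAbove a) p) (Prod.map (succAbove a) (succAbove a) q) ↔
      Crossing p q := by
  unfold Crossing succAbove
  simp only [Prod.map_fst, Prod.map_snd]
  split_ifs <;> omega

/-- Glue a triangle with apex `a + 1` onto the side `(a, a + 1)` of a polygon; the vertices after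
`a` move up by one. -/
def insertEar (a : ℕ) (T : Finset (ℕ × ℕ)) : Finset (ℕ × ℕ) :=
  insert (a, a + 2) (T.image (Prod.map (succAbove a) (succAbove a)))

section insertEar

variable {m n a : ℕ} {T : Finset (ℕ × ℕ)}

lemma ear_notMem_image (hT : IsTriangulation m T) (htail : ∀ p ∈ T, p.1 ≤ a) :
    (a, a + 2) ∉ T.image (Prod.map (succAbove a) (succAbove a)) := by
  simp only [Finset.mem_image, Prod.ext_iff, Prod.map_fst, Prod.map_snd, not_exists, not_and]
  intro p hp h₁ h₂
  have := htail p hp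
  have := (hT.1 p hp).1
  unfold succAbove at h₁ h₂
  split_ifs at h₁ h₂ <;> omega

theorem tails_insertEar (hT : IsTriangulation m T) (htail : ∀ p ∈ T, p.1 ≤ a) :
    tails (insertEar a T) = a :: tails T := by
  have hfst : (T.val.map (Prod.map (succAbove a) (succAbove a))).map Prod.fst =
      T.val.map Prod.fst := by
    rw [Multiset.map_map]
    refine Multiset.map_congr rfl fun p hp => ?_
    simp [succAbove, htail p hp]
  rw [tails, insertEar, Finset.insert_val_of_notMem (ear_notMem_image hT htail),
    Finset.image_val_of_injOn ((succAbove_injective a).prodMap (succAbove_injective a)).injOn,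
    Multiset.map_cons, hfst, Multiset.sort_cons]
  · rfl
  · intro b hb
    obtain ⟨p, hp, rfl⟩ := Multiset.mem_map.mp hb
    exact htail p hp

theorem isTriangulation_insertEar (hn : 2 ≤ n) (ha : a + 1 ≤ n) (hT : IsTriangulation (n + 1) T)
    (htail : ∀ p ∈ T, p.1 ≤ a) : IsTriangulation (n + 2) (insertEar a T) := by
  have hinj := (succAbove_injective a).prodMap (succAbove_injective a)
  refine ⟨?_, NonCrossing.insert ?_ ?_, ?_⟩
  · intro p hp
    obtain rfl | ⟨q, hq, rfl⟩ := Finset.mem_insert.mp hp |>.imp_right Finset.mem_image.mp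
    · exact ⟨le_rfl, by omega, by omega⟩
    · obtain ⟨h₁, h₂, h₃⟩ := hT.1 q hq
      have := htail q hq
      simp only [IsDiagonal, Prod.map_fst, Prod.map_snd, succAbove] at *
      split_ifs <;> omega
  · intro p hp q hq
    obtain ⟨p, hp', rfl⟩ := Finset.mem_image.mp hp
    obtain ⟨q, hq', rfl⟩ := Finset.mem_image.mp hq
    rw [crossing_map_succAbove_iff]
    exact hT.nonCrossing p hp' q hq'
  · intro p hp hcross
    obtain ⟨p, hp', rfl⟩ := Finset.mem_image.mp hp
    have := htail p hp'
    unfold Crossing succAbove at hcross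
    simp only [Prod.map_fst, Prod.map_snd] at hcross
    split_ifs at hcross <;> omega
  · rw [insertEar, Finset.card_insert_of_notMem (ear_notMem_image hT htail),
      Finset.card_image_of_injective _ hinj, hT.2.2]
    omega

end insertEar

theorem IsTriangulation.exists_eq_insertEar_of_ear_mem {n a : ℕ} {T : Finset (ℕ × ℕ)} (hn : 2 ≤ n)
    (hT : IsTriangulation (n + 2) T) (htail : ∀ p ∈ T, p.1 ≤ a) (hear : (a, a + 2) ∈ T) :
    ∃ T', IsTriangulation (n + 1) T' ∧ (∀ p ∈ T', p.1 ≤ a) ∧ T = insertEar a T' := by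
  set E := T.erase (a, a + 2)
  have hE : ∀ p ∈ E, p ∈ T ∧ ¬ (p.1 = a ∧ p.2 = a + 2) ∧ p.2 ≠ a + 1 := by
    intro p hp
    obtain ⟨hne, hpT⟩ := Finset.mem_erase.mp hp
    -- a diagonal ending at the apex `a + 1` would cross the ear
    refine ⟨hpT, fun h => hne (Prod.ext h.1 h.2), fun h => hT.nonCrossing _ hear p hpT (Or.inr ?_)⟩
    have := htail p hpT
    have := (hT.1 p hpT).1
    omega
  set σ := Prod.map (succAbove a) (succAbove a)
  set π := Prod.map (predAbove a) (predAbove a)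
  have hσπ : ∀ p ∈ E, σ (π p) = p := fun p hp =>
    Prod.ext (succAbove_predAbove (by have := htail p (hE p hp).1; omega))
      (succAbove_predAbove (hE p hp).2.2)
  have himage : (E.image π).image σ = E := by
    rw [Finset.image_image]
    exact (Finset.image_congr hσπ).trans Finset.image_id
  refine ⟨E.image π, ⟨?_, ?_, ?_⟩, ?_, ?_⟩
  · intro x hx
    obtain ⟨p, hp, rfl⟩ := Finset.mem_image.mp hx
    obtain ⟨hpT, hne, hp₂⟩ := hE p hp
    have := htail p hpT
    have := hT.1 p hpT
    have := (hT.1 _ hear).2.1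
    simp only [IsDiagonal, π, Prod.map_fst, Prod.map_snd, predAbove] at *
    split_ifs <;> omega
  · intro x hx y hy
    obtain ⟨p, hp, rfl⟩ := Finset.mem_image.mp hx
    obtain ⟨q, hq, rfl⟩ := Finset.mem_image.mp hy
    rw [← crossing_map_succAbove_iff a]
    change ¬ Crossing (σ (π p)) (σ (π q))
    rw [hσπ p hp, hσπ q hq]
    exact hT.nonCrossing p (hE p hp).1 q (hE q hq).1
  · have := Finset.card_image_of_injective (E.image π)
      ((succAbove_injective a).prodMap (succAbove_injective a))
    rw [himage, Finset.card_erase_of_mem hear, hT.2.2] at this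
    omega
  · intro x hx
    obtain ⟨p, hp, rfl⟩ := Finset.mem_image.mp hx
    have := htail p (hE p hp).1
    simp [π, predAbove, this]
  · rw [insertEar, himage, Finset.insert_erase hear]

section lam

variable {m a : ℕ} {T : Finset (ℕ × ℕ)}

lemma lam_zero (T : Finset (ℕ × ℕ)) : lam T 0 = 0 := rfl

lemma lam_succ (T : Finset (ℕ × ℕ)) (k : ℕ) : lam T (k + 1) = (tails T).getD k 0 := rfl

lemma lam_empty : lam ∅ = 0 := by
  funext k
  cases k <;> simp [lam, tails]

lemma lam_succ_le_lam (T : Finset (ℕ × ℕ)) {k : ℕ} (hk : 1 ≤ k) : lam T (k + 1) ≤ lam T k := by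
  obtain ⟨j, rfl⟩ := Nat.exists_eq_add_of_le' hk
  rw [lam_succ, lam_succ]
  by_cases h : j + 1 < (tails T).length
  · rw [List.getD_eq_getElem _ _ h, List.getD_eq_getElem _ _ (by omega)]
    exact List.pairwise_iff_getElem.mp (Multiset.pairwise_sort _ _) j (j + 1) _ h (by omega)
  · rw [List.getD_eq_default _ _ (by omega)]
    exact Nat.zero_le _

lemma mem_tails {x : ℕ} : x ∈ tails T ↔ ∃ b, (x, b) ∈ T := by
  simp [tails]

lemma le_lam_one {p : ℕ × ℕ} (hp : p ∈ T) : p.1 ≤ lam T 1 := by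
  have hmem : p.1 ∈ tails T := mem_tails.2 ⟨p.2, hp⟩
  obtain ⟨x, l, hxl⟩ := List.exists_cons_of_ne_nil (List.ne_nil_of_mem hmem)
  have hsorted : (x :: l).Pairwise (· ≥ ·) := hxl ▸ Multiset.pairwise_sort _ _
  rw [hxl] at hmem
  rw [lam_succ, hxl, List.getD_cons_zero]
  rcases List.mem_cons.mp hmem with h | h
  · exact h.le
  · exact List.rel_of_pairwise_cons hsorted h

lemma exists_mem_lam_one (hT : T.Nonempty) : ∃ b, (lam T 1, b) ∈ T := by
  have hlen : 0 < (tails T).length := by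
    rw [tails, Multiset.length_sort, Multiset.card_map]
    exact Finset.card_pos.mpr hT
  rw [← mem_tails, lam_succ, List.getD_eq_getElem _ _ hlen]
  exact List.getElem_mem hlen

lemma lam_insertEar_one (hT : IsTriangulation m T) (htail : ∀ p ∈ T, p.1 ≤ a) :
    lam (insertEar a T) 1 = a := by
  rw [lam_succ, tails_insertEar hT htail, List.getD_cons_zero]

end lam

theorem IsTriangulation.exists_eq_insertEar {n : ℕ} {T : Finset (ℕ × ℕ)} (hn : 2 ≤ n)
    (hT : IsTriangulation (n + 2) T) :
    ∃ a T', IsTriangulation (n + 1) T' ∧ (∀ p ∈ T', p.1 ≤ a) ∧ T = insertEar a T' := by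
  have hne : T.Nonempty := Finset.card_pos.mp (by rw [hT.2.2]; omega)
  have htail : ∀ p ∈ T, p.1 ≤ lam T 1 := fun p hp => le_lam_one hp
  obtain ⟨b, hb⟩ := exists_mem_lam_one hne
  exact ⟨_, hT.exists_eq_insertEar_of_ear_mem hn htail (hT.ear_mem htail hb)⟩

def removeFirstRow (f : ℕ → ℕ) : ℕ → ℕ := fun k => if k = 0 then 0 else f (k + 1)

lemma inY_succ_iff {n : ℕ} {f : ℕ → ℕ} :
    InY (n + 1) f ↔ f 0 = 0 ∧ f 1 ≤ n ∧ f 2 ≤ f 1 ∧ InY n (removeFirstRow f) := by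
  simp only [InY, removeFirstRow, if_true]
  constructor
  · rintro ⟨h0, hmono, hle⟩
    refine ⟨h0, hle 1 le_rfl, hmono 1 le_rfl, trivial, fun k hk => ?_, fun k hk => ?_⟩
    · simpa [show k ≠ 0 by omega] using hmono (k + 1) (by omega)
    · simpa [show k ≠ 0 by omega] using hle (k + 1) (by omega)
  · rintro ⟨h0, h1, h21, -, hmono, hle⟩
    refine ⟨h0, fun k hk => ?_, fun k hk => ?_⟩ <;>
      obtain ⟨j, rfl⟩ : ∃ j, k = j + 1 := ⟨k - 1, by omega⟩ <;> rcases j with _ | j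
    · exact h21
    · simpa using hmono (j + 1) (by omega)
    · simpa using h1
    · simpa using hle (j + 1) (by omega)

lemma eq_of_removeFirstRow_eq {f g : ℕ → ℕ} (h0 : f 0 = g 0) (h1 : f 1 = g 1)
    (h : removeFirstRow f = removeFirstRow g) : f = g := by
  funext k
  match k with
  | 0 => exact h0
  | 1 => exact h1
  | j + 2 => simpa [removeFirstRow] using congrFun h (j + 1)

lemma removeFirstRow_lam_insertEar {m a : ℕ} {T : Finset (ℕ × ℕ)} (hT : IsTriangulation m T)
    (htail : ∀ p ∈ T, p.1 ≤ a) : removeFirstRow (lam (insertEar a T)) = lam T := by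
  funext k
  cases k with
  | zero => rfl
  | succ j => simp [removeFirstRow, lam_succ, tails_insertEar hT htail]

lemma isTriangulation_iff_eq_empty {n : ℕ} {T : Finset (ℕ × ℕ)} (hn : n ≤ 1) :
    IsTriangulation (n + 2) T ↔ T = ∅ := by
  constructor
  · exact fun hT => Finset.card_eq_zero.mp (by rw [hT.2.2]; omega)
  · rintro rfl
    exact ⟨by simp, by simp, by simp only [Finset.card_empty]; omega⟩

lemma InY.eq_zero {n : ℕ} {f : ℕ → ℕ} (hn : n ≤ 1) (hf : InY n f) : f = 0 := by
  funext k
  cases k with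
  | zero => exact hf.1
  | succ j =>
    have := hf.2.2 (j + 1) (by omega)
    simp only [Pi.zero_apply]
    omega

lemma inY_zero (n : ℕ) : InY n 0 := ⟨rfl, fun _ _ => le_rfl, fun _ _ => Nat.zero_le _⟩

theorem inY_lam : ∀ {n : ℕ} {T : Finset (ℕ × ℕ)}, IsTriangulation (n + 2) T → InY n (lam T)
  | 0, _, hT | 1, _, hT => by
    rw [(isTriangulation_iff_eq_empty (by norm_num)).1 hT, lam_empty]
    exact inY_zero _
  | n + 2, _, hT => by
    obtain ⟨a, T', hT', htail, rfl⟩ := hT.exists_eq_insertEar (by omega)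
    have ha : a + 2 ≤ n + 3 := (hT.1 _ (Finset.mem_insert_self _ _)).2.1
    refine inY_succ_iff.2 ⟨lam_zero _, ?_, lam_succ_le_lam _ le_rfl, ?_⟩
    · rw [lam_insertEar_one hT' htail]
      omega
    · rw [removeFirstRow_lam_insertEar hT' htail]
      exact inY_lam hT'

theorem existsUnique_lam_eq : ∀ {n : ℕ} {f : ℕ → ℕ}, InY n f →
    ∃! T : Finset (ℕ × ℕ), IsTriangulation (n + 2) T ∧ lam T = f
  | 0, _, hf | 1, _, hf => by
    rw [hf.eq_zero (by norm_num)]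
    exact ⟨∅, ⟨(isTriangulation_iff_eq_empty (by norm_num)).2 rfl, lam_empty⟩,
      fun T hT => (isTriangulation_iff_eq_empty (by norm_num)).1 hT.1⟩
  | n + 2, f, hf => by
    obtain ⟨hf0, hf1, hf21, hf'⟩ := inY_succ_iff.1 hf
    obtain ⟨T', ⟨hT', hlamT'⟩, huniq⟩ := existsUnique_lam_eq hf'
    have htail : ∀ p ∈ T', p.1 ≤ f 1 := fun p hp =>
      (le_lam_one hp).trans (by simpa [hlamT', removeFirstRow] using hf21)
    refine ⟨insertEar (f 1) T', ⟨isTriangulation_insertEar (by omega) (by omega) hT' htail, ?_⟩, ?_⟩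
    · refine eq_of_removeFirstRow_eq (by rw [lam_zero, hf0]) (lam_insertEar_one hT' htail) ?_
      rw [removeFirstRow_lam_insertEar hT' htail, hlamT']
    · rintro T ⟨hT, rfl⟩
      obtain ⟨a, T₁, hT₁, htail₁, rfl⟩ := hT.exists_eq_insertEar (by omega)
      rw [lam_insertEar_one hT₁ htail₁,
        huniq T₁ ⟨hT₁, (removeFirstRow_lam_insertEar hT₁ htail₁).symm⟩]

/-- `Λ` is a bijection from the set of triangulations of the `(n+2)`-gon onto
the set `Y_n` of partitions `λ` with `λ_k ≤ n - k` for all `k`. -/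
theorem lam_bijective (n : ℕ) :
    (∀ T : Finset (ℕ × ℕ), IsTriangulation (n + 2) T → InY n (lam T)) ∧
    (∀ f : ℕ → ℕ, InY n f →
      ∃! T : Finset (ℕ × ℕ), IsTriangulation (n + 2) T ∧ lam T = f) :=
  ⟨fun _ => inY_lam, fun _ => existsUnique_lam_eq⟩
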